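/- Let S ⊆ ℤ^r be finite and nonempty, a_s ∈ K[n]\{0} for s ∈ S, and f ∈ K[n]; let a'_s denote the aperiodic part of a_s. Fix i ∈ {1,…,r}. Define k := max{ |s_i − t_i| : s = (s_1,…,s_r), t = (t_1,…,t_r) ∈ S }, A := { s ∈ S : there exists t ∈ S with t_i − s_i = k }, B := { s ∈ S : there exists t ∈ S with s_i − t_i = k }, and s_i := max{ Disp_i(a'_s, N_i^{−k} a'_t) : s ∈ A, t ∈ B }. Then for any solution y = p/(u·q) ∈ K(n) of the PLDE ∑_{s∈S} a_s N^s y = f, written in lowest terms with u the periodic part and q the aperiodic part of the denominator, we have Disp_i(q, q) ≤ s_i. -/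

import Mathlib

open MvPolynomial

/-- The substitution homomorphism `n_j ↦ n_j + i_j` on `K[n₁,…,n_r]`. -/
noncomputable def mShiftHom (K : Type*) [Field K] {r : ℕ} (i : Fin r → ℤ) :
    MvPolynomial (Fin r) K →ₐ[K] MvPolynomial (Fin r) K :=
  aeval (fun j => X j + C (i j : K))

/-- The shift automorphism `N^i` of `K[n₁,…,n_r]`, determined by `n_j ↦ n_j + i_j`. -/
noncomputable def mShift (K : Type*) [Field K] {r : ℕ} (i : Fin r → ℤ) :
    MvPolynomial (Fin r) K ≃ₐ[K] MvPolynomial (Fin r) K :=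
  AlgEquiv.ofAlgHom (mShiftHom K i) (mShiftHom K (-i))
    (by apply MvPolynomial.algHom_ext; intro j; simp [mShiftHom])
    (by apply MvPolynomial.algHom_ext; intro j; simp [mShiftHom])

/-- `Spread(p,q) = { i ∈ ℤ^r : gcd(p, N^i q) ≠ 1 }`, where `gcd ≠ 1` (not a unit)
is expressed as `¬ IsRelPrime`. -/
def mSpread {K : Type*} [Field K] {r : ℕ} (p q : MvPolynomial (Fin r) K) :
    Set (Fin r → ℤ) :=
  {i | ¬ IsRelPrime p (mShift K i q)}

/-- `Disp_k(p,q) = max { |i_k| : i ∈ Spread(p,q) }`, with values in `ℕ ∪ {-∞, ∞}`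
(`max ∅ = ⊥ = -∞`, unbounded sets give `∞`). -/
noncomputable def mDispAt {K : Type*} [Field K] {r : ℕ} (k : Fin r)
    (p q : MvPolynomial (Fin r) K) : WithBot ℕ∞ :=
  ⨆ i ∈ mSpread p q, (((i k).natAbs : ℕ∞) : WithBot ℕ∞)

/-- The canonical embedding of `K[n₁,…,n_r]` into its fraction field `K(n₁,…,n_r)`. -/
noncomputable def toFrac (K : Type*) [Field K] {r : ℕ} :
    MvPolynomial (Fin r) K →+* FractionRing (MvPolynomial (Fin r) K) :=
  algebraMap _ _

/-- The shift automorphism `N^i` extended to the fraction field `K(n₁,…,n_r)`. -/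
noncomputable def fShift (K : Type*) [Field K] {r : ℕ} (i : Fin r → ℤ) :
    FractionRing (MvPolynomial (Fin r) K) ≃+* FractionRing (MvPolynomial (Fin r) K) :=
  IsFractionRing.ringEquivOfRingEquiv (mShift K i).toRingEquiv

/-!
Let `i ∈ Spread(q, q)`, witnessed by a prime `v` with `v ∣ q` and `N^i v ∣ q`. Since `v` is
aperiodic, only finitely many shifts `N^j v` divide `q`. Order `ℤ^r` by an additive total order
refining the `co`-th coordinate and take the largest such `j` and the largest `t ∈ S`. After
clearing denominators, the prime `N^(t+j) v` divides the `t`-th denominator factor `N^t (u q)` and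
no other one, so it divides the coefficient `a_t · N^t pnum`; lowest terms and the periodicity of
`u` and of the periodic part of `a_t` force `N^(t+j) v ∣ a'_t`. The reversed order gives
`N^(t'+j') v ∣ a'_{t'}` with `t'` smallest, so `t' ∈ A`, `t ∈ B`, and these two factors of
`a'_{t'}` and `N_co^{-k} a'_t` differ by a shift whose `co`-coordinate is `j_co - j'_co ≥ |i_co|`.
-/

lemma isRelPrime_map_iff {M N F : Type*} [CommMonoid M] [CommMonoid N] [EquivLike F M N]
    [MulEquivClass F M N] (e : F) {x y : M} : IsRelPrime (e x) (e y) ↔ IsRelPrime x y := by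
  simp only [IsRelPrime, (EquivLike.surjective e).forall, map_dvd_iff, isUnit_map_iff]

lemma Finset.sup_sup_natAbs_sub_eq {ι : Type*} {S : Finset ι} {g : ι → ℤ} {smin smax : ι}
    (hmin : smin ∈ S) (hmax : smax ∈ S) (hmin_le : ∀ s ∈ S, g smin ≤ g s)
    (hle_max : ∀ s ∈ S, g s ≤ g smax) :
    (S.sup fun s => S.sup fun t => (g s - g t).natAbs) = (g smax - g smin).natAbs := by
  refine le_antisymm (Finset.sup_le fun s hs => Finset.sup_le fun t ht => ?_)
    (Finset.le_sup_of_le hmax (Finset.le_sup_of_le hmin le_rfl))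
  have := hmin_le s hs; have := hmin_le t ht; have := hle_max s hs; have := hle_max t ht
  omega

lemma Prime.dvd_of_sum_mul_prod_erase_eq {R ι : Type*} [CommRing R] [DecidableEq ι]
    {S : Finset ι} {c P : ι → R} {f : R}
    (E : ∑ s ∈ S, c s * ∏ t ∈ S.erase s, P t = f * ∏ t ∈ S, P t)
    {w : R} (hw : Prime w) {s₀ : ι} (hs₀ : s₀ ∈ S) (hdvd : w ∣ P s₀)
    (hndvd : ∀ t ∈ S, t ≠ s₀ → ¬w ∣ P t) : w ∣ c s₀ := by
  have hothers : ∀ s ∈ S.erase s₀, w ∣ c s * ∏ t ∈ S.erase s, P t := fun s hs =>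
    (hdvd.trans (Finset.dvd_prod_of_mem P
      (Finset.mem_erase.mpr ⟨(Finset.ne_of_mem_erase hs).symm, hs₀⟩))).mul_left _
  have hterm : w ∣ c s₀ * ∏ t ∈ S.erase s₀, P t := by
    have hsum : w ∣ ∑ s ∈ S, c s * ∏ t ∈ S.erase s, P t :=
      E ▸ (hdvd.trans (Finset.dvd_prod_of_mem P hs₀)).mul_left f
    rw [← Finset.add_sum_erase S _ hs₀] at hsum
    exact (dvd_add_left (Finset.dvd_sum hothers)).mp hsum
  refine (hw.dvd_or_dvd hterm).resolve_right fun hprod => ?_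
  obtain ⟨t, ht, hwt⟩ := (hw.dvd_finsetProd_iff _).mp hprod
  exact hndvd t (Finset.mem_of_mem_erase ht) (Finset.ne_of_mem_erase ht) hwt

section Shift

variable {K : Type*} [Field K] {r : ℕ}

lemma mShift_mShift (i j : Fin r → ℤ) (p : MvPolynomial (Fin r) K) :
    mShift K i (mShift K j p) = mShift K (i + j) p := by
  change (mShiftHom K i).comp (mShiftHom K j) p = mShiftHom K (i + j) p
  congr 1
  refine algHom_ext fun l => ?_
  simp [mShiftHom, add_assoc]

lemma mShift_zero (p : MvPolynomial (Fin r) K) : mShift K 0 p = p := by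
  change mShiftHom K 0 p = AlgHom.id K _ p
  congr 1
  refine algHom_ext fun l => ?_
  simp [mShiftHom]

lemma dvd_mShift_iff {i : Fin r → ℤ} {p q : MvPolynomial (Fin r) K} :
    p ∣ mShift K i q ↔ mShift K (-i) p ∣ q := by
  rw [← map_dvd_iff (mShift K (-i)), mShift_mShift, neg_add_cancel, mShift_zero]

lemma mShift_dvd_mShift_iff {i j : Fin r → ℤ} {p q : MvPolynomial (Fin r) K} :
    mShift K i p ∣ mShift K j q ↔ mShift K (i - j) p ∣ q := by
  rw [dvd_mShift_iff, mShift_mShift, neg_add_eq_sub]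

lemma mSpread_mShift (c : Fin r → ℤ) (p q : MvPolynomial (Fin r) K) :
    mSpread (mShift K c p) (mShift K c q) = mSpread p q := by
  ext i
  change ¬IsRelPrime _ _ ↔ ¬IsRelPrime _ _
  rw [mShift_mShift, add_comm, ← mShift_mShift, isRelPrime_map_iff]

lemma exists_prime_of_mem_mSpread {i : Fin r → ℤ} {p q : MvPolynomial (Fin r) K} (hp : p ≠ 0)
    (hi : i ∈ mSpread p q) : ∃ v, Prime v ∧ mShift K i v ∣ p ∧ v ∣ q := by
  obtain ⟨d, hdp, hdq, hd⟩ : ∃ d, d ∣ p ∧ d ∣ mShift K i q ∧ Prime d := by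
    change ¬IsRelPrime _ _ at hi
    simpa only [UniqueFactorizationMonoid.isRelPrime_iff_no_prime_factors hp, not_forall,
      not_not, exists_prop] using hi
  refine ⟨mShift K (-i) d, (MulEquiv.prime_iff _).mpr hd, ?_, dvd_mShift_iff.mp hdq⟩
  rwa [mShift_mShift, add_neg_cancel, mShift_zero]

lemma sub_mem_mSpread_of_dvd {i j : Fin r → ℤ} {p q v : MvPolynomial (Fin r) K} (hv : ¬IsUnit v)
    (hp : mShift K i v ∣ p) (hq : mShift K j v ∣ q) : i - j ∈ mSpread p q := fun h =>
  hv <| (isUnit_map_iff (mShift K i) v).mp <|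
    h hp (by rwa [dvd_mShift_iff, mShift_mShift, neg_sub, sub_add_cancel])

lemma eq_of_associated_mShift {v : MvPolynomial (Fin r) K} (hv : ¬IsUnit v)
    (hfin : (mSpread v v).Finite) {i j : Fin r → ℤ}
    (h : Associated (mShift K i v) (mShift K j v)) : i = j := by
  set δ := -i + j
  have hδ : Associated v (mShift K δ v) := by
    simpa only [mShift_mShift, neg_add_cancel, mShift_zero] using h.map (mShift K (-i))
  have hpow : ∀ n : ℕ, Associated v (mShift K (n • δ) v) := by
    intro n
    induction n with
    | zero => simpa only [zero_smul, mShift_zero] using Associated.refl v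
    | succ n ih =>
      rw [succ_nsmul, ← mShift_mShift]
      exact ih.trans (hδ.map (mShift K (n • δ)))
  by_contra hne
  have hδ0 : δ ≠ 0 := fun h0 => hne (neg_add_eq_zero.mp h0)
  refine (Set.infinite_of_injective_forall_mem
    ((smul_left_injective ℤ hδ0).comp Nat.cast_injective) fun n => ?_) hfin
  intro hrel
  simp only [Function.comp_apply, natCast_zsmul] at hrel
  exact hv (hrel dvd_rfl (hpow n).dvd)

lemma finite_setOf_mShift_dvd {q v : MvPolynomial (Fin r) K} (hq : q ≠ 0) (hv : Irreducible v)
    (hfin : (mSpread v v).Finite) : {j | mShift K j v ∣ q}.Finite := by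
  refine Set.Finite.of_finite_image (f := fun j => Associates.mk (mShift K j v)) ?_
    fun _ _ _ _ h =>
      eq_of_associated_mShift hv.not_isUnit hfin (Associates.mk_eq_mk_iff_associated.mp h)
  refine ((UniqueFactorizationMonoid.factors q).finite_toSet.image Associates.mk).subset ?_
  rintro _ ⟨j, hj, rfl⟩
  obtain ⟨p, hp, hassoc⟩ := UniqueFactorizationMonoid.exists_mem_factors_of_dvd hq
    ((MulEquiv.irreducible_iff (mShift K j)).mpr hv) hj
  exact ⟨p, hp, (Associates.mk_eq_mk_iff_associated.mpr hassoc).symm⟩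

lemma mDispAt_le_iSup₂ {ι κ : Type*} {A : Set ι} {B : Set κ}
    (co : Fin r) {p q : MvPolynomial (Fin r) K} {p' : ι → MvPolynomial (Fin r) K}
    {q' : κ → MvPolynomial (Fin r) K}
    (H : ∀ i ∈ mSpread p q, ∃ s ∈ A, ∃ t ∈ B, ∃ i' ∈ mSpread (p' s) (q' t),
      (i co).natAbs ≤ (i' co).natAbs) :
    mDispAt co p q ≤ ⨆ s ∈ A, ⨆ t ∈ B, mDispAt co (p' s) (q' t) := by
  refine iSup₂_le fun i hi => ?_
  obtain ⟨s, hs, t, ht, i', hi', hle⟩ := H i hi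
  refine le_iSup₂_of_le s hs <| le_iSup₂_of_le t ht <| le_iSup₂_of_le i' hi' ?_
  exact_mod_cast hle

lemma fShift_toFrac (i : Fin r → ℤ) (p : MvPolynomial (Fin r) K) :
    fShift K i (toFrac K p) = toFrac K (mShift K i p) :=
  IsFractionRing.ringEquivOfRingEquiv_algebraMap _ p

lemma sum_mul_mShift_mul_prod_erase_eq {S : Finset (Fin r → ℤ)}
    {a : (Fin r → ℤ) → MvPolynomial (Fin r) K} {f pnum den : MvPolynomial (Fin r) K}
    (hden : den ≠ 0) {y : FractionRing (MvPolynomial (Fin r) K)}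
    (hy : y = toFrac K pnum / toFrac K den)
    (hsol : ∑ s ∈ S, toFrac K (a s) * fShift K s y = toFrac K f) :
    ∑ s ∈ S, a s * mShift K s pnum * ∏ t ∈ S.erase s, mShift K t den
      = f * ∏ t ∈ S, mShift K t den := by
  have hinj : Function.Injective (toFrac K (r := r)) := IsFractionRing.injective _ _
  have hden' : ∀ t, toFrac K (mShift K t den) ≠ 0 := fun t =>
    (map_ne_zero_iff _ hinj).mpr ((map_ne_zero_iff _ (mShift K t).injective).mpr hden)
  apply hinj
  simp only [map_sum, map_mul, map_prod, ← hsol, Finset.sum_mul]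
  refine Finset.sum_congr rfl fun s hs => ?_
  rw [← Finset.mul_prod_erase S _ hs, hy, map_div₀, fShift_toFrac, fShift_toFrac]
  field_simp [hden' s]

end Shift

section Extremal

variable {r : ℕ}

def coordLexEmbedding (co : Fin r) : (Fin r → ℤ) →+ ℤ ×ₗ Lex (Fin r → ℤ) where
  toFun j := toLex (j co, toLex j)
  map_zero' := rfl
  map_add' _ _ := rfl

lemma coordLexEmbedding_injective (co : Fin r) : Function.Injective (coordLexEmbedding co) :=
  fun _ _ h => toLex.injective (congrArg (fun z => (ofLex z).2) h)

lemma le_of_coordLexEmbedding_le {co : Fin r} {x y : Fin r → ℤ}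
    (h : coordLexEmbedding co x ≤ coordLexEmbedding co y) : x co ≤ y co :=
  (Prod.Lex.le_iff.mp h).elim le_of_lt fun h => h.1.le

variable {K : Type*} [Field K] {Γ : Type*} [AddCommGroup Γ] [LinearOrder Γ]
  [IsOrderedAddMonoid Γ]

lemma exists_mShift_add_dvd_aperiodicPart (φ : (Fin r → ℤ) →+ Γ) (hφ : Function.Injective φ)
    {S : Finset (Fin r → ℤ)} (hS : S.Nonempty) {a au a' : (Fin r → ℤ) → MvPolynomial (Fin r) K}
    (hfac : ∀ s ∈ S, a s = au s * a' s)
    (hau : ∀ s ∈ S, ∀ d, Irreducible d → d ∣ au s → (mSpread d d).Infinite)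
    {f pnum u q : MvPolynomial (Fin r) K} (hq : q ≠ 0) (hlow : IsRelPrime pnum (u * q))
    (hu : ∀ d, Irreducible d → d ∣ u → (mSpread d d).Infinite)
    (E : ∑ s ∈ S, a s * mShift K s pnum * ∏ t ∈ S.erase s, mShift K t (u * q)
      = f * ∏ t ∈ S, mShift K t (u * q))
    {v : MvPolynomial (Fin r) K} (hv : Prime v) (hvq : v ∣ q) (hvfin : (mSpread v v).Finite) :
    ∃ t ∈ S, ∃ j, (∀ s ∈ S, φ s ≤ φ t) ∧ (∀ j', mShift K j' v ∣ q → φ j' ≤ φ j) ∧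
      mShift K (t + j) v ∣ a' t := by
  obtain ⟨jm, hjm, hjmax⟩ := Set.exists_max_image _ φ
    (finite_setOf_mShift_dvd hq hv.irreducible hvfin) ⟨0, by rwa [Set.mem_ofPred_eq, mShift_zero]⟩
  obtain ⟨tm, htm, htmax⟩ := S.exists_max_image φ hS
  have hv_not_dvd : ∀ j x, (∀ d, Irreducible d → d ∣ x → (mSpread d d).Infinite) →
      ¬mShift K j v ∣ x := fun j x hx h =>
    hx _ ((MulEquiv.irreducible_iff _).mpr hv.irreducible) h (by rwa [mSpread_mShift])
  have hw : Prime (mShift K (tm + jm) v) := (MulEquiv.prime_iff _).mpr hv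
  -- by maximality of `tm` and `jm`, the only denominator factor `N^t (u q)` that the prime
  -- `N^(tm+jm) v` divides is the one with `t = tm`
  have hwa : mShift K (tm + jm) v ∣ a tm * mShift K tm pnum := by
    refine hw.dvd_of_sum_mul_prod_erase_eq E htm ?_ fun t ht hne hwt => ?_
    · rw [map_mul]
      exact dvd_mul_of_dvd_right (mShift_dvd_mShift_iff.mpr (by rwa [add_sub_cancel_left])) _
    · rw [map_mul] at hwt
      rcases hw.dvd_or_dvd hwt with hwu | hwq
      · exact hv_not_dvd _ _ hu (mShift_dvd_mShift_iff.mp hwu)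
      · have hle := hjmax _ (mShift_dvd_mShift_iff.mp hwq)
        rw [map_sub, map_add, add_sub_right_comm, add_le_iff_nonpos_left, sub_nonpos] at hle
        exact hne (hφ (le_antisymm (htmax t ht) hle))
  rcases hw.dvd_or_dvd hwa with hwa | hwp
  · rw [hfac tm htm] at hwa
    exact ⟨tm, htm, jm, htmax, hjmax,
      (hw.dvd_or_dvd hwa).resolve_left (hv_not_dvd _ _ (hau tm htm))⟩
  · rw [mShift_dvd_mShift_iff, add_sub_cancel_left] at hwp
    exact absurd (hlow hwp (dvd_mul_of_dvd_right hjm u))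
      ((MulEquiv.prime_iff (mShift K jm)).mpr hv).not_isUnit

end Extremal

theorem dispAt_of_denominator_le_general
    {K : Type*} [Field K] {r : ℕ}
    (S : Finset (Fin r → ℤ)) (hS : S.Nonempty)
    (a : (Fin r → ℤ) → MvPolynomial (Fin r) K)
    (f : MvPolynomial (Fin r) K)
    (au a' : (Fin r → ℤ) → MvPolynomial (Fin r) K)
    (hpart : ∀ s ∈ S, a s = au s * a' s ∧
      (∀ d, Irreducible d → d ∣ au s → (mSpread d d).Infinite) ∧
      (∀ d, Irreducible d → d ∣ a' s → (mSpread d d).Finite))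
    (co : Fin r)
    (k : ℕ) (hk : k = S.sup fun s => S.sup fun t => (s co - t co).natAbs)
    (y : FractionRing (MvPolynomial (Fin r) K))
    (hsol : ∑ s ∈ S, toFrac K (a s) * fShift K s y = toFrac K f)
    (pnum u q : MvPolynomial (Fin r) K)
    (hden0 : u * q ≠ 0)
    (hy : y = toFrac K pnum / toFrac K (u * q))
    (hlow : IsRelPrime pnum (u * q))
    (hu : ∀ d, Irreducible d → d ∣ u → (mSpread d d).Infinite)
    (hq : ∀ d, Irreducible d → d ∣ q → (mSpread d d).Finite) :
    mDispAt co q q ≤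
      ⨆ s ∈ {s : Fin r → ℤ | s ∈ S ∧ ∃ t ∈ S, t co - s co = (k : ℤ)},
      ⨆ t ∈ {t : Fin r → ℤ | t ∈ S ∧ ∃ t' ∈ S, t co - t' co = (k : ℤ)},
        mDispAt co (a' s) (mShift K (Pi.single co (-(k : ℤ))) (a' t)) := by
  have hq0 : q ≠ 0 := right_ne_zero_of_mul hden0
  have E := sum_mul_mShift_mul_prod_erase_eq hden0 hy hsol
  set L : Fin r → ℤ := Pi.single co (-(k : ℤ))
  refine mDispAt_le_iSup₂ co (q' := fun t => mShift K L (a' t)) fun i hi => ?_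
  obtain ⟨v, hv, hviq, hvq⟩ := exists_prime_of_mem_mSpread hq0 hi
  have hvq0 : mShift K 0 v ∣ q := by rwa [mShift_zero]
  have extremal := fun (φ : (Fin r → ℤ) →+ ℤ ×ₗ Lex (Fin r → ℤ)) (hφ : Function.Injective φ) =>
    exists_mShift_add_dvd_aperiodicPart φ hφ hS (fun s hs => (hpart s hs).1)
      (fun s hs => (hpart s hs).2.1) hq0 hlow hu E hv hvq (hq v hv.irreducible hvq)
  obtain ⟨tm, htm, jm, htmax, hjmax, htdvd⟩ := extremal _ (coordLexEmbedding_injective co)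
  obtain ⟨sm, hsm, jn, hsmin, hjnmin, hsdvd⟩ :=
    extremal (-coordLexEmbedding co) (neg_injective.comp (coordLexEmbedding_injective co))
  have hco_min : ∀ {x y}, (-coordLexEmbedding co) x ≤ (-coordLexEmbedding co) y → y co ≤ x co :=
    fun h => le_of_coordLexEmbedding_le (neg_le_neg_iff.mp h)
  have hkco : (k : ℤ) = tm co - sm co := by
    rw [hk, Finset.sup_sup_natAbs_sub_eq (g := fun s => s co) hsm htm
      (fun s hs => hco_min (hsmin s hs)) (fun s hs => le_of_coordLexEmbedding_le (htmax s hs))]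
    have := hco_min (hsmin tm htm)
    omega
  refine ⟨sm, ⟨hsm, tm, htm, hkco.symm⟩, tm, ⟨htm, sm, hsm, hkco.symm⟩, _,
    sub_mem_mSpread_of_dvd hv.not_isUnit hsdvd (j := tm + jm + L) ?_, ?_⟩
  · rwa [mShift_dvd_mShift_iff, add_sub_cancel_right]
  · have hjm0 := le_of_coordLexEmbedding_le (hjmax 0 hvq0)
    have hjmi := le_of_coordLexEmbedding_le (hjmax i hviq)
    have hjn0 := hco_min (hjnmin 0 hvq0)
    have hjni := hco_min (hjnmin i hviq)
    simp only [Pi.zero_apply] at hjm0 hjn0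
    simp only [L, Pi.sub_apply, Pi.add_apply, Pi.single_eq_same]
    omega

/-- **Lemma (dispersion bound, one coordinate).**
Let `S ⊆ ℤ^r` be finite and nonempty, `a_s ∈ K[n]\{0}` for `s ∈ S`, `f ∈ K[n]`, and let
`a s = au s * a' s` with `au s` the periodic part and `a' s` the aperiodic part of `a s`.
Fix a coordinate `co`, put `k := max { |s_co - t_co| : s, t ∈ S }`,
`A := { s ∈ S : ∃ t ∈ S, t_co - s_co = k }`, `B := { s ∈ S : ∃ t ∈ S, s_co - t_co = k }`,
and `s_co := max { Disp_co(a' s, N_co^{-k} (a' t)) : s ∈ A, t ∈ B }`.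
Then for any solution `y = pnum/(u·q) ∈ K(n)` of `∑_{s ∈ S} a_s N^s y = f`, written in
lowest terms with `u` the periodic part and `q` the aperiodic part of the denominator,
`Disp_co(q,q) ≤ s_co`. -/
theorem dispAt_of_denominator_le
    {K : Type*} [Field K] [CharZero K] {r : ℕ}
    (S : Finset (Fin r → ℤ)) (hS : S.Nonempty)
    (a : (Fin r → ℤ) → MvPolynomial (Fin r) K) (ha : ∀ s ∈ S, a s ≠ 0)
    (f : MvPolynomial (Fin r) K)
    (au a' : (Fin r → ℤ) → MvPolynomial (Fin r) K)
    (hpart : ∀ s ∈ S, a s = au s * a' s ∧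
      (∀ d, Irreducible d → d ∣ au s → (mSpread d d).Infinite) ∧
      (∀ d, Irreducible d → d ∣ a' s → (mSpread d d).Finite))
    (co : Fin r)
    (k : ℕ) (hk : k = S.sup fun s => S.sup fun t => (s co - t co).natAbs)
    (y : FractionRing (MvPolynomial (Fin r) K))
    (hsol : ∑ s ∈ S, toFrac K (a s) * fShift K s y = toFrac K f)
    (pnum u q : MvPolynomial (Fin r) K)
    (hden0 : u * q ≠ 0)
    (hy : y = toFrac K pnum / toFrac K (u * q))
    (hlow : IsRelPrime pnum (u * q))
    (hu : ∀ d, Irreducible d → d ∣ u → (mSpread d d).Infinite)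
    (hq : ∀ d, Irreducible d → d ∣ q → (mSpread d d).Finite) :
    mDispAt co q q ≤
      ⨆ s ∈ {s : Fin r → ℤ | s ∈ S ∧ ∃ t ∈ S, t co - s co = (k : ℤ)},
      ⨆ t ∈ {t : Fin r → ℤ | t ∈ S ∧ ∃ t' ∈ S, t co - t' co = (k : ℤ)},
        mDispAt co (a' s) (mShift K (Pi.single co (-(k : ℤ))) (a' t)) :=
  dispAt_of_denominator_le_general S hS a f au a' hpart co k hk y hsol pnum u q hden0 hy hlow hu hq
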